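/- arXiv:2605.27883 — 6 statements merged into one kernel-verified Lean document; each statement's English description precedes it below -/
import Mathlib

section
/- If c is bounded on X×Y and f: X→ℝ, g: Y→ℝ satisfy the first-order conditions ∫(f(x)+g(y)-c(x,y))₊ dQ(y) = ε for all x ∈ X and ∫(f(x)+g(y)-c(x,y))₊ dP(x) = ε for all y ∈ Y, and the oscillations of f on X and of g on Y are each at most 2‖c‖_∞, then -5‖c‖_∞ + ε ≤ f(x) + g(y) ≤ 5‖c‖_∞ + ε for all (x,y) ∈ X×Y. -/
/-! Fix `x ∈ X`. The positive part of `f x + g y - c (x, y)` has `Q`-mean `ε > 0`, so by the first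
moment method `f x + g y - c (x, y)` is at least `ε` at some `y₁ ∈ Y` and at most `ε` at some
`y₂ ∈ Y`. The oscillation bound on `g` moves both points to an arbitrary `y ∈ Y` at a cost of
`2C`, and `|c| ≤ C` costs another `C`, so in fact `|f x + g y - ε| ≤ 3C`. -/

open MeasureTheory

section FirstMoment

variable {β : Type*} [MeasurableSpace β] {Q : Measure β} [IsProbabilityMeasure Q] {Y : Set β}
  {u : β → ℝ}

lemma exists_mem_integral_max_zero_le (hQY : Q Yᶜ = 0) (hpos : 0 < ∫ y, max (u y) 0 ∂Q) :
    ∃ y ∈ Y, ∫ y, max (u y) 0 ∂Q ≤ u y := by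
  obtain ⟨y, hy, hle⟩ :=
    exists_notMem_null_integral_le (Integrable.of_integral_ne_zero hpos.ne') hQY
  exact ⟨y, Set.notMem_compl_iff.mp hy, (le_max_iff.mp hle).resolve_right hpos.not_ge⟩

lemma exists_mem_le_integral_max_zero (hQY : Q Yᶜ = 0) (hpos : 0 < ∫ y, max (u y) 0 ∂Q) :
    ∃ y ∈ Y, u y ≤ ∫ y, max (u y) 0 ∂Q := by
  obtain ⟨y, hy, hle⟩ :=
    exists_notMem_null_le_integral (Integrable.of_integral_ne_zero hpos.ne') hQY
  exact ⟨y, Set.notMem_compl_iff.mp hy, (le_max_left _ _).trans hle⟩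

end FirstMoment

theorem stmt0_general {α β : Type*} [MeasurableSpace β]
    (X : Set α) (Y : Set β)
    (Q : Measure β)
    [IsProbabilityMeasure Q]
    (hQY : Q Yᶜ = 0)
    (f : α → ℝ) (g : β → ℝ) (c : α × β → ℝ) (C ε : ℝ) (hε : 0 < ε)
    (hc : ∀ x ∈ X, ∀ y ∈ Y, |c (x, y)| ≤ C)
    (hoscg : ∀ y ∈ Y, ∀ y' ∈ Y, g y - g y' ≤ 2 * C)
    (hfoc1 : ∀ x ∈ X, ∫ y, max (f x + g y - c (x, y)) 0 ∂Q = ε) :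
    ∀ x ∈ X, ∀ y ∈ Y, -5 * C + ε ≤ f x + g y ∧ f x + g y ≤ 5 * C + ε := by
  intro x hx y hy
  have hC : 0 ≤ C := (abs_nonneg _).trans (hc x hx y hy)
  have hpos : 0 < ∫ y, max (f x + g y - c (x, y)) 0 ∂Q := (hfoc1 x hx).symm ▸ hε
  obtain ⟨y₁, hy₁, hlow⟩ := exists_mem_integral_max_zero_le hQY hpos
  obtain ⟨y₂, hy₂, hupp⟩ := exists_mem_le_integral_max_zero hQY hpos
  rw [hfoc1 x hx] at hlow hupp
  have hc₁ := abs_le.mp (hc x hx y₁ hy₁)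
  have hc₂ := abs_le.mp (hc x hx y₂ hy₂)
  have hg₁ := hoscg y₁ hy₁ y hy
  have hg₂ := hoscg y hy y₂ hy₂
  constructor <;> linarith

theorem stmt0 {α β : Type*} [MeasurableSpace α] [MeasurableSpace β]
    (X : Set α) (Y : Set β) (hX : X.Nonempty) (hY : Y.Nonempty)
    (P : Measure α) (Q : Measure β)
    [IsProbabilityMeasure P] [IsProbabilityMeasure Q]
    (hPX : P Xᶜ = 0) (hQY : Q Yᶜ = 0)
    (f : α → ℝ) (g : β → ℝ) (c : α × β → ℝ) (C ε : ℝ) (hε : 0 < ε)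
    (hc : ∀ x ∈ X, ∀ y ∈ Y, |c (x, y)| ≤ C)
    (hoscf : ∀ x ∈ X, ∀ x' ∈ X, f x - f x' ≤ 2 * C)
    (hoscg : ∀ y ∈ Y, ∀ y' ∈ Y, g y - g y' ≤ 2 * C)
    (hfoc1 : ∀ x ∈ X, ∫ y, max (f x + g y - c (x, y)) 0 ∂Q = ε)
    (hfoc2 : ∀ y ∈ Y, ∫ x, max (f x + g y - c (x, y)) 0 ∂P = ε) :
    ∀ x ∈ X, ∀ y ∈ Y, -5 * C + ε ≤ f x + g y ∧ f x + g y ≤ 5 * C + ε :=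
  stmt0_general X Y Q hQY f g c C ε hε hc hoscg hfoc1
end

section
/- Let w ∈ L²(P⊗Q) and define u(x) := ∫w(x,y) dQ(y) - w̄/2 and v(y) := ∫w(x,y) dP(x) - w̄/2, where w̄ := ∫w d(P⊗Q). Then ∫u dP = ∫v dQ = w̄/2, and if moreover w = ũ ⊕ ṽ for some ũ ∈ L²(P), ṽ ∈ L²(Q) (i.e., w(x,y) = ũ(x) + ṽ(y) a.e.), then u ⊕ v = w a.e. and ‖u‖²_{L²(P)} + ‖v‖²_{L²(Q)} ≤ ‖w‖²_{L²(P⊗Q)}. -/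
/-! Integrating `w = ũ ⊕ ṽ` in one variable gives `ũ` (resp. `ṽ`) plus a constant, so `u ⊕ v`
differs from `w` by a constant, and comparing means shows the constant is `0`. Expanding the square,
`‖w‖² = ‖u‖² + ‖v‖² + 2 (∫ u dP) (∫ v dQ) = ‖u‖² + ‖v‖² + w̄² / 2`. -/

open MeasureTheory

namespace MeasureTheory

variable {α β : Type*} [MeasurableSpace α] [MeasurableSpace β] {μ : Measure α} {ν : Measure β}

theorem Measure.ae_ae_of_ae_prod_swap [SFinite μ] [SFinite ν] {p : α × β → Prop}
    (h : ∀ᵐ z ∂μ.prod ν, p z) : ∀ᵐ y ∂ν, ∀ᵐ x ∂μ, p (x, y) :=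
  Measure.ae_ae_of_ae_prod (p := fun z : β × α => p z.swap)
    (Measure.measurePreserving_swap.quasiMeasurePreserving.ae h)

theorem integral_integral_sub_const_left [SFinite ν] [IsProbabilityMeasure μ] {w : α × β → ℝ}
    (hw : Integrable w (μ.prod ν)) (c : ℝ) :
    ∫ x, ((∫ y, w (x, y) ∂ν) - c) ∂μ = (∫ z, w z ∂μ.prod ν) - c := by
  rw [integral_sub hw.integral_prod_left (integrable_const c), integral_const, integral_prod w hw]
  simp

theorem integral_integral_sub_const_right [SFinite μ] [IsProbabilityMeasure ν]
    {w : α × β → ℝ} (hw : Integrable w (μ.prod ν)) (c : ℝ) :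
    ∫ y, ((∫ x, w (x, y) ∂μ) - c) ∂ν = (∫ z, w z ∂μ.prod ν) - c := by
  rw [integral_sub hw.integral_prod_right (integrable_const c), integral_const,
    integral_prod_symm w hw]
  simp

theorem integral_fst_add_snd [IsProbabilityMeasure μ] [IsProbabilityMeasure ν] {f : α → ℝ}
    {g : β → ℝ} (hf : Integrable f μ) (hg : Integrable g ν) :
    ∫ z, (f z.1 + g z.2) ∂μ.prod ν = (∫ x, f x ∂μ) + ∫ y, g y ∂ν := by
  rw [integral_add (hf.comp_fst ν) (hg.comp_snd μ), integral_fun_fst, integral_fun_snd]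
  simp

theorem ae_integral_right_eq_of_ae_eq_add [IsProbabilityMeasure ν] {w : α × β → ℝ}
    {f : α → ℝ} {g : β → ℝ} (hg : Integrable g ν) (hw : w =ᵐ[μ.prod ν] fun z => f z.1 + g z.2) :
    ∀ᵐ x ∂μ, ∫ y, w (x, y) ∂ν = f x + ∫ y, g y ∂ν := by
  filter_upwards [Measure.ae_ae_of_ae_prod hw] with x hx
  rw [integral_congr_ae hx, integral_add (integrable_const _) hg, integral_const]
  simp

theorem ae_integral_left_eq_of_ae_eq_add [IsProbabilityMeasure μ] [SFinite ν]
    {w : α × β → ℝ} {f : α → ℝ} {g : β → ℝ} (hf : Integrable f μ)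
    (hw : w =ᵐ[μ.prod ν] fun z => f z.1 + g z.2) :
    ∀ᵐ y ∂ν, ∫ x, w (x, y) ∂μ = (∫ x, f x ∂μ) + g y := by
  filter_upwards [Measure.ae_ae_of_ae_prod_swap hw] with y hy
  rw [integral_congr_ae hy, integral_add hf (integrable_const _), integral_const]
  simp

theorem ae_eq_add_marginals_sub_integral [IsProbabilityMeasure μ] [IsProbabilityMeasure ν]
    {w : α × β → ℝ} {f : α → ℝ} {g : β → ℝ} (hf : Integrable f μ) (hg : Integrable g ν)
    (hw : w =ᵐ[μ.prod ν] fun z => f z.1 + g z.2) :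
    (fun z : α × β => (∫ y, w (z.1, y) ∂ν) + (∫ x, w (x, z.2) ∂μ) - ∫ z, w z ∂μ.prod ν)
      =ᵐ[μ.prod ν] w := by
  have hmean : ∫ z, w z ∂μ.prod ν = (∫ x, f x ∂μ) + ∫ y, g y ∂ν := by
    rw [integral_congr_ae hw, integral_fst_add_snd hf hg]
  filter_upwards [Measure.quasiMeasurePreserving_fst.ae (ae_integral_right_eq_of_ae_eq_add hg hw),
    Measure.quasiMeasurePreserving_snd.ae (ae_integral_left_eq_of_ae_eq_add hf hw), hw]
    with z hleft hright hz
  rw [hleft, hright, hmean, hz]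
  ring

theorem integral_fst_add_snd_sq [IsProbabilityMeasure μ] [IsProbabilityMeasure ν] {f : α → ℝ}
    {g : β → ℝ} (hf : MemLp f 2 μ) (hg : MemLp g 2 ν) :
    ∫ z, (f z.1 + g z.2) ^ 2 ∂μ.prod ν =
      (∫ x, f x ^ 2 ∂μ) + (∫ y, g y ^ 2 ∂ν) + 2 * ((∫ x, f x ∂μ) * ∫ y, g y ∂ν) := by
  have hsq : ∀ z : α × β, (f z.1 + g z.2) ^ 2 = (f z.1 ^ 2 + g z.2 ^ 2) + 2 * (f z.1 * g z.2) :=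
    fun z => by ring
  simp_rw [hsq]
  rw [integral_add (f := fun z => f z.1 ^ 2 + g z.2 ^ 2)
      ((hf.integrable_sq.comp_fst ν).add (hg.integrable_sq.comp_snd μ))
      (((hf.integrable one_le_two).mul_prod (hg.integrable one_le_two)).const_mul 2),
    integral_fst_add_snd hf.integrable_sq hg.integrable_sq, integral_const_mul, integral_prod_mul]

end MeasureTheory

theorem stmt2 {α β : Type*} [MeasurableSpace α] [MeasurableSpace β]
    (P : Measure α) (Q : Measure β)
    [IsProbabilityMeasure P] [IsProbabilityMeasure Q]
    (w : α × β → ℝ) (hw : MemLp w 2 (P.prod Q))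
    (wbar : ℝ) (hwbar : wbar = ∫ z, w z ∂(P.prod Q))
    (u : α → ℝ) (hu : u = fun x => (∫ y, w (x, y) ∂Q) - wbar / 2)
    (v : β → ℝ) (hv : v = fun y => (∫ x, w (x, y) ∂P) - wbar / 2) :
    (∫ x, u x ∂P) = wbar / 2 ∧
    (∫ y, v y ∂Q) = wbar / 2 ∧
    ∀ ut : α → ℝ, ∀ vt : β → ℝ, MemLp ut 2 P → MemLp vt 2 Q →
      (w =ᵐ[P.prod Q] fun z => ut z.1 + vt z.2) →
      ((fun z : α × β => u z.1 + v z.2) =ᵐ[P.prod Q] w) ∧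
      (∫ x, (u x) ^ 2 ∂P) + (∫ y, (v y) ^ 2 ∂Q) ≤ ∫ z, (w z) ^ 2 ∂(P.prod Q) := by
  have hwI : Integrable w (P.prod Q) := hw.integrable one_le_two
  have hmean_u : ∫ x, u x ∂P = wbar / 2 := by
    rw [hu, integral_integral_sub_const_left hwI, ← hwbar]; ring
  have hmean_v : ∫ y, v y ∂Q = wbar / 2 := by
    rw [hv, integral_integral_sub_const_right hwI, ← hwbar]; ring
  refine ⟨hmean_u, hmean_v, fun ut vt hut hvt hadd => ?_⟩
  have hutI := hut.integrable one_le_two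
  have hvtI := hvt.integrable one_le_two
  have hsum : (fun z : α × β => u z.1 + v z.2) =ᵐ[P.prod Q] w := by
    convert ae_eq_add_marginals_sub_integral hutI hvtI hadd using 1
    funext z
    simp only [hu, hv, hwbar]
    ring
  have huL2 : MemLp u 2 P := (hut.add (memLp_const ((∫ y, vt y ∂Q) - wbar / 2))).ae_eq <| by
    filter_upwards [ae_integral_right_eq_of_ae_eq_add hvtI hadd] with x hx
    simp only [hu, Pi.add_apply, hx]
    ring
  have hvL2 : MemLp v 2 Q := (hvt.add (memLp_const ((∫ x, ut x ∂P) - wbar / 2))).ae_eq <| by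
    filter_upwards [ae_integral_left_eq_of_ae_eq_add hutI hadd] with y hy
    simp only [hv, Pi.add_apply, hy]
    ring
  refine ⟨hsum, ?_⟩
  calc (∫ x, u x ^ 2 ∂P) + ∫ y, v y ^ 2 ∂Q
      ≤ (∫ x, u x ^ 2 ∂P) + (∫ y, v y ^ 2 ∂Q) + 2 * ((∫ x, u x ∂P) * ∫ y, v y ∂Q) := by
        rw [hmean_u, hmean_v]
        nlinarith [sq_nonneg wbar]
    _ = ∫ z, (u z.1 + v z.2) ^ 2 ∂P.prod Q := (integral_fst_add_snd_sq huL2 hvL2).symm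
    _ = ∫ z, w z ^ 2 ∂P.prod Q := integral_congr_ae (hsum.fun_comp (· ^ 2))
end

section
/- Let Q be a probability measure on ℝ^d with compact support Ω_Q, let g: Ω_Q → ℝ be continuous, let c(x, ·) be continuous on Ω_Q for x fixed, and assume y ↦ g(y) - c(x,y) is 2L-Lipschitz and ∫(f(x) + g(y) - c(x,y))₊ dQ(y) = ε. Then there exists y* ∈ Ω_Q with f(x) + g(y*) - c(x,y*) ≥ ε, and for all a, b ∈ [f(x) - ε/2, f(x) + ε/2] with a ≤ b, F(b) - F(a) ≥ Q(B_{ε/(4L)}(y*)) · (b - a), where F(t) := ∫(t + g(y) - c(x,y))₊ dQ(y). -/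
open MeasureTheory

/-- The topological support of a measure on Euclidean space: points all of whose
neighborhoods (balls) have positive measure. -/
def msupport {d : ℕ} (Q : Measure (EuclideanSpace ℝ (Fin d))) :
    Set (EuclideanSpace ℝ (Fin d)) :=
  {y | ∀ r > 0, 0 < Q (Metric.ball y r)}

/-!
Put `φ y := g y - c (x, y)` and `F t := ∫ (t + φ)₊ dQ`. Since `φ` is Lipschitz on the compact,
conull support of `Q`, it attains its maximum there at some `y*`, and `ε = F (f x) ≤ (f x + φ y*)₊`
forces `ε ≤ f x + φ y*`. On the ball of radius `ε / (4L)` around `y*` the Lipschitz bound gives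
`φ ≥ φ y* - ε / 2`, so for `a ≥ f x - ε / 2` both `a + φ` and `b + φ` are nonnegative there and
`(b + φ)₊ - (a + φ)₊ = b - a`; elsewhere this difference is still nonnegative. Integrating gives
`F b - F a ≥ Q(ball) (b - a)`.
-/

open Set Filter

lemma msupport_eq_support {d : ℕ} (Q : Measure (EuclideanSpace ℝ (Fin d))) :
    msupport Q = Q.support := by
  ext y
  exact Metric.nhds_basis_ball.mem_measureSupport.symm

section PositivePart

variable {α : Type*} [MeasurableSpace α] {μ : Measure α} {φ : α → ℝ}

lemma ContinuousOn.integrable_of_isCompact_of_ae_mem [TopologicalSpace α] [T2Space α]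
    [OpensMeasurableSpace α] [IsFiniteMeasureOnCompacts μ] {s : Set α} {f : α → ℝ}
    (hf : ContinuousOn f s) (hs : IsCompact s) (hae : ∀ᵐ y ∂μ, y ∈ s) : Integrable f μ := by
  simpa only [IntegrableOn, Measure.restrict_eq_self_of_ae_mem hae] using
    hf.integrableOn_compact (μ := μ) hs

lemma le_add_of_isMaxOn_of_integral_max_eq [IsProbabilityMeasure μ] {s : Set α} {y₀ : α}
    {t ε : ℝ} (hmax : IsMaxOn φ s y₀) (hae : ∀ᵐ y ∂μ, y ∈ s)
    (hint : Integrable (fun y => max (t + φ y) 0) μ) (hε : 0 < ε)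
    (hF : ∫ y, max (t + φ y) 0 ∂μ = ε) : ε ≤ t + φ y₀ := by
  have hbound : ε ≤ max (t + φ y₀) 0 := by
    calc ε = ∫ y, max (t + φ y) 0 ∂μ := hF.symm
      _ ≤ ∫ _, max (t + φ y₀) 0 ∂μ := by
        refine integral_mono_ae hint (integrable_const _) ?_
        filter_upwards [hae] with y hy
        exact max_le_max_right 0 ((add_le_add_iff_left t).2 (hmax hy))
      _ = max (t + φ y₀) 0 := by simp
  exact (le_max_iff.mp hbound).resolve_right hε.not_ge

lemma measureReal_mul_sub_le_integral_max_sub [IsFiniteMeasure μ] {a b : ℝ}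
    (ha : Integrable (fun y => max (a + φ y) 0) μ) (hb : Integrable (fun y => max (b + φ y) 0) μ)
    {B : Set α} (hB : MeasurableSet B) (hab : a ≤ b) (hpos : ∀ᵐ y ∂μ, y ∈ B → 0 ≤ a + φ y) :
    μ.real B * (b - a) ≤ ∫ y, max (b + φ y) 0 ∂μ - ∫ y, max (a + φ y) 0 ∂μ := by
  have hpt : ∀ᵐ y ∂μ,
      B.indicator (fun _ => b - a) y ≤ max (b + φ y) 0 - max (a + φ y) 0 := by
    filter_upwards [hpos] with y hy
    by_cases hyB : y ∈ B
    · have hay := hy hyB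
      rw [indicator_of_mem hyB, max_eq_left hay, max_eq_left (by linarith)]
      linarith
    · rw [indicator_of_notMem hyB]
      exact sub_nonneg.2 (max_le_max_right 0 (by linarith))
  calc μ.real B * (b - a) = ∫ y, B.indicator (fun _ => b - a) y ∂μ := by
        rw [integral_indicator_const _ hB, smul_eq_mul]
    _ ≤ ∫ y, (max (b + φ y) 0 - max (a + φ y) 0) ∂μ :=
        integral_mono_ae ((integrable_const _).indicator hB) (hb.sub ha) hpt
    _ = _ := integral_sub hb ha

end PositivePart

theorem stmt9_general {d : ℕ} (Q : Measure (EuclideanSpace ℝ (Fin d)))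
    [IsProbabilityMeasure Q]
    (hcomp : IsCompact (msupport Q))
    (L ε fx : ℝ) (hL : 0 < L) (hε : 0 < ε)
    (g : EuclideanSpace ℝ (Fin d) → ℝ)
    (c : EuclideanSpace ℝ (Fin d) × EuclideanSpace ℝ (Fin d) → ℝ)
    (x : EuclideanSpace ℝ (Fin d))
    (hLip : ∀ y ∈ msupport Q, ∀ y' ∈ msupport Q,
      |(g y - c (x, y)) - (g y' - c (x, y'))| ≤ 2 * L * ‖y - y'‖)
    (hfoc : ∫ y, max (fx + g y - c (x, y)) 0 ∂Q = ε) :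
    ∃ ystar ∈ msupport Q,
      ε ≤ fx + g ystar - c (x, ystar) ∧
      ∀ a b : ℝ, fx - ε / 2 ≤ a → a ≤ b → b ≤ fx + ε / 2 →
        (Q (Metric.ball ystar (ε / (4 * L)))).toReal * (b - a)
          ≤ (∫ y, max (b + g y - c (x, y)) 0 ∂Q)
            - ∫ y, max (a + g y - c (x, y)) 0 ∂Q := by
  simp only [msupport_eq_support, add_sub_assoc] at *
  set φ := fun y => g y - c (x, y)
  have hφ : LipschitzOnWith (Real.toNNReal (2 * L)) φ Q.support :=
    .of_dist_le' fun y hy y' hy' => by rw [Real.dist_eq, dist_eq_norm]; exact hLip y hy y' hy'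
  have hae : ∀ᵐ y ∂Q, y ∈ Q.support := Measure.support_mem_ae
  have hint (t : ℝ) : Integrable (fun y => max (t + φ y) 0) Q :=
    ((continuousOn_const.add hφ.continuousOn).sup
      continuousOn_const).integrable_of_isCompact_of_ae_mem hcomp hae
  obtain ⟨ystar, hystar, hmax⟩ :=
    hcomp.exists_isMaxOn (Measure.nonempty_support (NeZero.ne Q)) hφ.continuousOn
  have hε_le : ε ≤ fx + φ ystar :=
    le_add_of_isMaxOn_of_integral_max_eq hmax hae (hint fx) hε hfoc
  refine ⟨ystar, hystar, hε_le, fun a b ha hab _ => ?_⟩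
  refine measureReal_mul_sub_le_integral_max_sub (hint a) (hint b) measurableSet_ball hab ?_
  filter_upwards [hae] with y hy hyB
  have hdist : dist (φ y) (φ ystar) ≤ 2 * L * dist y ystar := by
    simpa only [Real.coe_toNNReal _ (by positivity : 0 ≤ 2 * L)] using
      hφ.dist_le_mul y hy ystar hystar
  have hball : 2 * L * dist y ystar ≤ ε / 2 := by
    have := (Metric.mem_ball.mp hyB).le
    rw [le_div_iff₀ (by positivity)] at this
    linarith
  linarith [neg_abs_le (φ y - φ ystar), Real.dist_eq (φ y) (φ ystar)]

theorem stmt9 {d : ℕ} (Q : Measure (EuclideanSpace ℝ (Fin d)))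
    [IsProbabilityMeasure Q]
    (hcomp : IsCompact (msupport Q))
    (L ε fx : ℝ) (hL : 0 < L) (hε : 0 < ε)
    (g : EuclideanSpace ℝ (Fin d) → ℝ)
    (c : EuclideanSpace ℝ (Fin d) × EuclideanSpace ℝ (Fin d) → ℝ)
    (x : EuclideanSpace ℝ (Fin d))
    (hgcont : ContinuousOn g (msupport Q))
    (hccont : ContinuousOn (fun y => c (x, y)) (msupport Q))
    (hLip : ∀ y ∈ msupport Q, ∀ y' ∈ msupport Q,
      |(g y - c (x, y)) - (g y' - c (x, y'))| ≤ 2 * L * ‖y - y'‖)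
    (hfoc : ∫ y, max (fx + g y - c (x, y)) 0 ∂Q = ε) :
    ∃ ystar ∈ msupport Q,
      ε ≤ fx + g ystar - c (x, ystar) ∧
      ∀ a b : ℝ, fx - ε / 2 ≤ a → a ≤ b → b ≤ fx + ε / 2 →
        (Q (Metric.ball ystar (ε / (4 * L)))).toReal * (b - a)
          ≤ (∫ y, max (b + g y - c (x, y)) 0 ∂Q)
            - ∫ y, max (a + g y - c (x, y)) 0 ∂Q :=
  stmt9_general Q hcomp L ε fx hL hε g c x hLip hfoc
end

section
/- Let Ω ⊂ ℝ^d be convex with diameter D > 0, ε > 0, and let σ: Ω → ℝ be concave and continuous. Suppose there exists x* ∈ Ω with σ(x*) ≥ ε. Let S := {x ∈ Ω : σ(x) ≥ 0}. Then for every x ∈ Ω with σ(x) < 0, we have σ(x) ≤ -(ε/D)·dist(x, S). -/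
open Metric

/-- Moving from `x` towards `y` by the fraction `t = (c - σ x) / (σ y - σ x)` of the segment,
concavity already lifts `σ` to the level `c`; the distance travelled is `t * dist x y`. -/
theorem ConcaveOn.infDist_superlevelSet_mul_le {E : Type*} [NormedAddCommGroup E]
    [NormedSpace ℝ E] {Ω : Set E} {σ : E → ℝ} (hσ : ConcaveOn ℝ Ω σ) {x y : E}
    (hx : x ∈ Ω) (hy : y ∈ Ω) {c : ℝ} (hxc : σ x < c) (hcy : c ≤ σ y) :
    infDist x {s ∈ Ω | c ≤ σ s} * (σ y - σ x) ≤ (c - σ x) * dist x y := by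
  have hgap : 0 < σ y - σ x := by linarith
  set t := (c - σ x) / (σ y - σ x) with ht
  have ht₀ : 0 ≤ t := div_nonneg (by linarith) hgap.le
  have ht₁ : t ≤ 1 := (div_le_one hgap).2 (by linarith)
  have hσz : c ≤ σ (AffineMap.lineMap x y t) := by
    have hlevel : (1 - t) • σ x + t • σ y = c := by
      simp only [smul_eq_mul, ht]
      field_simp
      ring
    rw [AffineMap.lineMap_apply_module, ← hlevel]
    exact hσ.2 hx hy (by linarith) ht₀ (by ring)
  have hzΩ : AffineMap.lineMap x y t ∈ Ω := hσ.1.lineMap_mem hx hy ⟨ht₀, ht₁⟩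
  calc infDist x {s ∈ Ω | c ≤ σ s} * (σ y - σ x)
      ≤ dist x (AffineMap.lineMap x y t) * (σ y - σ x) := by
        gcongr
        exact infDist_le_dist_of_mem ⟨hzΩ, hσz⟩
    _ = (c - σ x) * dist x y := by
        rw [dist_left_lineMap, Real.norm_of_nonneg ht₀, ht]
        field_simp

theorem stmt12_general {d : ℕ} (Ω : Set (EuclideanSpace ℝ (Fin d)))
    (hD : 0 < Metric.diam Ω)
    (σ : EuclideanSpace ℝ (Fin d) → ℝ)
    (hconc : ConcaveOn ℝ Ω σ)
    (ε : ℝ) (hε : 0 < ε)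
    (xstar : EuclideanSpace ℝ (Fin d)) (hxstar : xstar ∈ Ω) (hσx : ε ≤ σ xstar) :
    ∀ x ∈ Ω, σ x < 0 →
      σ x ≤ -(ε / Metric.diam Ω) * Metric.infDist x {s ∈ Ω | 0 ≤ σ s} := by
  intro x hx hσx_neg
  have hbdd : Bornology.IsBounded Ω := by
    by_contra h
    exact hD.ne' (diam_eq_zero_of_unbounded h)
  have hσ_gap : ε ≤ σ xstar - σ x := by linarith
  have key : ε * infDist x {s ∈ Ω | 0 ≤ σ s} ≤ -σ x * diam Ω :=
    calc ε * infDist x {s ∈ Ω | 0 ≤ σ s}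
        ≤ infDist x {s ∈ Ω | 0 ≤ σ s} * (σ xstar - σ x) := by
          rw [mul_comm]
          exact mul_le_mul_of_nonneg_left hσ_gap infDist_nonneg
      _ ≤ (0 - σ x) * dist x xstar :=
          hconc.infDist_superlevelSet_mul_le hx hxstar hσx_neg (by linarith)
      _ ≤ -σ x * diam Ω := by
          rw [zero_sub]
          exact mul_le_mul_of_nonneg_left (dist_le_diam_of_mem hbdd hx hxstar) (by linarith)
  rw [neg_mul, div_mul_eq_mul_div, le_neg, div_le_iff₀ hD]
  linarith

theorem stmt12 {d : ℕ} (Ω : Set (EuclideanSpace ℝ (Fin d)))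
    (hconv : Convex ℝ Ω) (hD : 0 < Metric.diam Ω)
    (σ : EuclideanSpace ℝ (Fin d) → ℝ)
    (hconc : ConcaveOn ℝ Ω σ) (hcont : ContinuousOn σ Ω)
    (ε : ℝ) (hε : 0 < ε)
    (xstar : EuclideanSpace ℝ (Fin d)) (hxstar : xstar ∈ Ω) (hσx : ε ≤ σ xstar) :
    ∀ x ∈ Ω, σ x < 0 →
      σ x ≤ -(ε / Metric.diam Ω) * Metric.infDist x {s ∈ Ω | 0 ≤ σ s} :=
  stmt12_general Ω hD σ hconc ε hε xstar hxstar hσx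
end

section
/- Let Σ, Σ' be nonempty compact subsets of ℝ^d × ℝ^d and Ω, Ω' nonempty compact sets with Σ ⊂ Ω, Σ' ⊂ Ω', d_H(Ω, Ω') ≤ Δ. Let σ, σ': Ω ∪ Ω' → ℝ be K-Lipschitz functions with ‖σ - σ'‖_∞ ≤ δ on Ω ∪ Ω', satisfying σ(z) ≥ 0 for z ∈ Σ and σ'(z) ≥ 0 for z ∈ Σ'. Assume σ'(z) ≤ -a·dist(z,Σ') for all z ∈ Ω' \ Σ' and σ(z) ≤ -a·dist(z,Σ) for all z ∈ Ω \ Σ, with a > 0, and σ(z') ≥ -δ for all z' ∈ Σ'. Then d_H(Σ, Σ') ≤ (1 + K/a)Δ + δ/a. -/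
lemma aux_stmt15 {X : Type*} [MetricSpace X] {S O : Set X}
    (hOc : IsCompact O) (hO : O.Nonempty) {Δ δ K a : ℝ}
    (hK : 0 ≤ K) (ha : 0 < a) (hδ : 0 ≤ δ) {σ : X → ℝ}
    (hnd : ∀ z ∈ O \ S, σ z ≤ -a * Metric.infDist z S) {z' : X}
    (hz' : Metric.infDist z' O ≤ Δ)
    (hLip : ∀ z ∈ O, |σ z' - σ z| ≤ K * dist z' z)
    (hσz' : -δ ≤ σ z') :
    Metric.infDist z' S ≤ (1 + K / a) * Δ + δ / a := by
  obtain ⟨z, hzO, hzd⟩ := hOc.exists_infDist_eq_dist hO z'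
  have hΔ0 : 0 ≤ Δ := le_trans Metric.infDist_nonneg hz'
  have hdz : dist z' z ≤ Δ := hzd ▸ hz'
  by_cases hzS : z ∈ S
  · have h1 : Metric.infDist z' S ≤ dist z' z := Metric.infDist_le_dist_of_mem hzS
    have : (0:ℝ) ≤ K / a * Δ + δ / a := by positivity
    nlinarith
  · have h1 := hnd z ⟨hzO, hzS⟩
    have h2 := hLip z hzO
    have h3 : σ z' - σ z ≤ K * dist z' z := le_trans (le_abs_self _) h2
    have h4 : -δ - K * Δ ≤ σ z := by nlinarith
    have h5 : Metric.infDist z S ≤ (δ + K * Δ) / a := by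
      rw [le_div_iff₀ ha]; nlinarith
    have h6 : Metric.infDist z' S ≤ Metric.infDist z S + dist z' z :=
      Metric.infDist_le_infDist_add_dist
    have : (δ + K * Δ) / a = δ / a + K / a * Δ := by ring
    nlinarith

theorem stmt15 {d : ℕ}
    (S S' O O' : Set (WithLp 2 (EuclideanSpace ℝ (Fin d) × EuclideanSpace ℝ (Fin d))))
    (hS : S.Nonempty) (hS' : S'.Nonempty) (hO : O.Nonempty) (hO' : O'.Nonempty)
    (hSc : IsCompact S) (hS'c : IsCompact S')
    (hOc : IsCompact O) (hO'c : IsCompact O')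
    (hSO : S ⊆ O) (hS'O' : S' ⊆ O')
    (Δ δ K a : ℝ) (hK : 0 ≤ K) (ha : 0 < a)
    (hΔ : Metric.hausdorffDist O O' ≤ Δ)
    (σ σ' : WithLp 2 (EuclideanSpace ℝ (Fin d) × EuclideanSpace ℝ (Fin d)) → ℝ)
    (hσLip : ∀ z ∈ O ∪ O', ∀ w ∈ O ∪ O', |σ z - σ w| ≤ K * dist z w)
    (hσ'Lip : ∀ z ∈ O ∪ O', ∀ w ∈ O ∪ O', |σ' z - σ' w| ≤ K * dist z w)
    (hsup : ∀ z ∈ O ∪ O', |σ z - σ' z| ≤ δ)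
    (hposS : ∀ z ∈ S, 0 ≤ σ z) (hposS' : ∀ z ∈ S', 0 ≤ σ' z)
    (hnd : ∀ z ∈ O \ S, σ z ≤ -a * Metric.infDist z S)
    (hnd' : ∀ z ∈ O' \ S', σ' z ≤ -a * Metric.infDist z S')
    (hσonS' : ∀ z ∈ S', -δ ≤ σ z) :
    Metric.hausdorffDist S S' ≤ (1 + K / a) * Δ + δ / a := by
  obtain ⟨z0, hz0⟩ := hS
  have hδ0 : 0 ≤ δ := le_trans (abs_nonneg _) (hsup z0 (Or.inl (hSO hz0)))
  have hΔ0 : 0 ≤ Δ := le_trans Metric.hausdorffDist_nonneg hΔ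
  have hfin : EMetric.hausdorffEdist O O' ≠ ⊤ :=
    Metric.hausdorffEdist_ne_top_of_nonempty_of_bounded hO hO' hOc.isBounded hO'c.isBounded
  have hr : (0:ℝ) ≤ (1 + K / a) * Δ + δ / a := by
    have : (0:ℝ) ≤ 1 + K / a := by positivity
    have : (0:ℝ) ≤ δ / a := by positivity
    nlinarith
  apply Metric.hausdorffDist_le_of_infDist hr
  · intro z hz
    have hzO : Metric.infDist z O' ≤ Δ :=
      le_trans (Metric.infDist_le_hausdorffDist_of_mem (hSO hz) hfin) hΔ
    have hσ'z : -δ ≤ σ' z := by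
      have h1 := hsup z (Or.inl (hSO hz))
      have h2 := hposS z hz
      have := abs_le.1 h1
      linarith [this.2]
    exact aux_stmt15 hO'c hO' hK ha hδ0 hnd' hzO
      (fun w hw => hσ'Lip z (Or.inl (hSO hz)) w (Or.inr hw)) hσ'z
  · intro z' hz'
    have hzO : Metric.infDist z' O ≤ Δ := by
      have h := Metric.infDist_le_hausdorffDist_of_mem (hS'O' hz')
        (by rw [Metric.hausdorffEDist_comm (s := O')]; exact hfin)
      rw [Metric.hausdorffDist_comm] at h
      exact le_trans h hΔ
    exact aux_stmt15 hOc hO hK ha hδ0 hnd hzO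
      (fun w hw => hσLip z' (Or.inr (hS'O' hz')) w (Or.inl hw)) (hσonS' z' hz')
end

section
/- The Hausdorff distance between Σ⁰ := ([0,1]×{0}) ∪ ([1/4,1]×{1}) and Σ^η := [0,1]×{0,1}, as subsets of ℝ² with Euclidean norm, equals 1/4. -/
open Metric Set WithLp

/- Σ⁰ ⊆ Σ^η, and every point (a, 1) of Σ^η is within 1/4 of (max a (1/4), 1) ∈ Σ⁰, so the
Hausdorff distance is at most 1/4. The point (0, 1) ∈ Σ^η attains it: the lower segment of Σ⁰ is
at height distance 1 from it and the upper one starts at abscissa 1/4. -/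

theorem Metric.hausdorffDist_eq_of_mem_dist {α : Type*} [PseudoMetricSpace α] {s t : Set α}
    {r : ℝ} (hr : 0 ≤ r) (H1 : ∀ x ∈ s, ∃ y ∈ t, dist x y ≤ r)
    (H2 : ∀ x ∈ t, ∃ y ∈ s, dist x y ≤ r) {x : α} (hx : x ∈ t)
    (hfar : ∀ y ∈ s, r ≤ dist x y) : hausdorffDist s t = r := by
  have hfin : hausdorffEDist t s ≠ ⊤ := by
    refine ne_top_of_le_ne_top ENNReal.ofReal_ne_top
      (hausdorffEDist_le_of_mem_edist (r := ENNReal.ofReal r) ?_ ?_)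
    · simpa only [edist_le_ofReal hr] using H2
    · simpa only [edist_le_ofReal hr] using H1
  obtain ⟨y, hy, -⟩ := H2 x hx
  refine le_antisymm (hausdorffDist_le_of_mem_dist hr H1 H2) ?_
  calc r ≤ infDist x s := (le_infDist ⟨y, hy⟩).2 hfar
    _ ≤ hausdorffDist t s := infDist_le_hausdorffDist_of_mem hx hfin
    _ = hausdorffDist s t := hausdorffDist_comm

theorem WithLp.dist_toLp_prod_of_snd_eq {α β : Type*} [SeminormedAddCommGroup α]
    [SeminormedAddCommGroup β] (a c : α) (b : β) :
    dist (toLp 2 (a, b)) (toLp 2 (c, b)) = dist a c := by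
  rw [prod_dist_eq_of_L2]
  simp [Real.sqrt_sq dist_nonneg]


theorem Icc_prod_zero_union_Icc_prod_one_subset :
    (Icc (0 : ℝ) 1 ×ˢ {(0 : ℝ)}) ∪ (Icc (1 / 4 : ℝ) 1 ×ˢ {(1 : ℝ)}) ⊆
      Icc (0 : ℝ) 1 ×ˢ ({0, 1} : Set ℝ) := by
  rintro ⟨a, b⟩ (⟨ha, hb⟩ | ⟨ha, hb⟩)
  · exact ⟨ha, Or.inl hb⟩
  · exact ⟨⟨by linarith [ha.1], ha.2⟩, Or.inr hb⟩

theorem exists_dist_le_quarter_of_mem {p : ℝ × ℝ} (hp : p ∈ Icc (0 : ℝ) 1 ×ˢ ({0, 1} : Set ℝ)) :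
    ∃ q ∈ (Icc (0 : ℝ) 1 ×ˢ {(0 : ℝ)}) ∪ (Icc (1 / 4 : ℝ) 1 ×ˢ {(1 : ℝ)}),
      dist (toLp 2 p) (toLp 2 q) ≤ 1 / 4 := by
  obtain ⟨a, b⟩ := p
  obtain ⟨ha, rfl | rfl⟩ := hp
  · exact ⟨(a, 0), Or.inl ⟨ha, rfl⟩, by simp⟩
  · refine ⟨(max a (1 / 4), 1), Or.inr ⟨⟨le_max_right _ _, max_le ha.2 (by norm_num)⟩, rfl⟩, ?_⟩
    rw [dist_toLp_prod_of_snd_eq, Real.dist_eq, abs_le]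
    constructor <;> cases max_cases a (1 / 4) <;> linarith [ha.1]

theorem quarter_le_dist_zero_one {q : ℝ × ℝ}
    (hq : q ∈ (Icc (0 : ℝ) 1 ×ˢ {(0 : ℝ)}) ∪ (Icc (1 / 4 : ℝ) 1 ×ˢ {(1 : ℝ)})) :
    1 / 4 ≤ dist (toLp 2 ((0 : ℝ), (1 : ℝ))) (toLp 2 q) := by
  obtain ⟨a, b⟩ := q
  obtain ⟨-, rfl⟩ | ⟨ha, rfl⟩ := hq
  · calc (1 / 4 : ℝ) ≤ dist (1 : ℝ) 0 := by norm_num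
      _ ≤ _ := dist_snd_le (toLp 2 ((0 : ℝ), (1 : ℝ))) (toLp 2 (a, 0))
  · calc (1 / 4 : ℝ) ≤ dist (0 : ℝ) a := by
          rw [dist_comm, Real.dist_eq, sub_zero]
          exact ha.1.trans (le_abs_self a)
      _ ≤ _ := dist_fst_le (toLp 2 ((0 : ℝ), (1 : ℝ))) (toLp 2 (a, 1))

theorem stmt19 :
    Metric.hausdorffDist
        ((WithLp.equiv 2 (ℝ × ℝ)).symm ''
          ((Set.Icc (0 : ℝ) 1 ×ˢ {(0 : ℝ)}) ∪ (Set.Icc (1 / 4 : ℝ) 1 ×ˢ {(1 : ℝ)})))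
        ((WithLp.equiv 2 (ℝ × ℝ)).symm ''
          (Set.Icc (0 : ℝ) 1 ×ˢ ({0, 1} : Set ℝ)))
      = 1 / 4 := by
  refine hausdorffDist_eq_of_mem_dist (x := toLp 2 (0, 1)) (by norm_num) ?_ ?_ ?_ ?_
  · rintro _ ⟨p, hp, rfl⟩
    exact ⟨_, mem_image_of_mem _ (Icc_prod_zero_union_Icc_prod_one_subset hp), by simp⟩
  · rintro _ ⟨p, hp, rfl⟩
    obtain ⟨q, hq, hpq⟩ := exists_dist_le_quarter_of_mem hp
    exact ⟨_, mem_image_of_mem _ hq, hpq⟩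
  · exact mem_image_of_mem _ ⟨⟨le_rfl, zero_le_one⟩, Or.inr rfl⟩
  · rintro _ ⟨q, hq, rfl⟩
    exact quarter_le_dist_zero_one hq
end
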